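/- Fix T > 0 and w ∈ ℝ^n, and let x be a maximal solution of the transformed system (quadODE). If the trajectory {x(s)} is bounded, then x is defined for all s ≥ 0 and converges, as s → ∞, to an equilibrium point of (quadODE). If the trajectory is unbounded, then x blows up in finite time (|x(s)| → ∞ as s approaches some finite time). -/

import Mathlib

/-!
The last coordinate solves `ẋ = -x`, so it decays like `e^{-s}`. Each other coordinate `u = xᵢ`
then solves a scalar Riccati equation `u' = a u² - u + β(s) u + ε(s)` with `a ≥ 0`, where `β → 0`
and, by lower triangularity, `ε → 0` as soon as the earlier coordinates are bounded. On a global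
solution such a `u` is bounded: every level below `-4` is a barrier from below, and from above
either a barrier (`a = 0`) or a Riccati blow-up argument (`a > 0`) applies. A bounded solution of an
asymptotically autonomous scalar equation `u' = φ(u) + ε(s)` converges to a zero of `φ`, because
it cannot cross a level `c` with `φ c ≠ 0` in the wrong direction once `|ε| < |φ c|`. If instead
the lifetime is finite, Picard–Lindelöf with an existence time that is uniform on balls forces
`‖x‖ → ∞`, since otherwise the solution could be continued.
-/

open Filter Topology

noncomputable section

/-- `g_i(w) = (1/2) wᵀ π_i w + (A^C w)_i`. -/
def gfun {m n : ℕ} (π : Fin m → Matrix (Fin n) (Fin n) ℝ)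
    (AC : Matrix (Fin m) (Fin n) ℝ) (w : Fin n → ℝ) (i : Fin m) : ℝ :=
  (1 / 2) * (∑ j, ∑ k, w j * π i j k * w k) + ∑ j, AC i j * w j

/-- `f_i(v,w) = (1/2) v_i² 1_{i∈I} + Σ_{k ≤ i} A^V_{ik} v_k + g_i(w)`. -/
def fRic {m n : ℕ} (I : Finset (Fin m)) (AV : Matrix (Fin m) (Fin m) ℝ)
    (π : Fin m → Matrix (Fin n) (Fin n) ℝ) (AC : Matrix (Fin m) (Fin n) ℝ)
    (v : Fin m → ℝ) (w : Fin n → ℝ) (i : Fin m) : ℝ :=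
  (1 / 2) * (v i) ^ 2 * (if i ∈ I then 1 else 0)
    + (∑ k ∈ Finset.univ.filter (fun k => k ≤ i), AV i k * v k)
    + gfun π AC w i

/-- `E(w) = {v : f_i(v,w) ≤ 0 ∀ i}`. -/
def Eset {m n : ℕ} (I : Finset (Fin m)) (AV : Matrix (Fin m) (Fin m) ℝ)
    (π : Fin m → Matrix (Fin n) (Fin n) ℝ) (AC : Matrix (Fin m) (Fin n) ℝ)
    (w : Fin n → ℝ) : Set (Fin m → ℝ) :=
  {v | ∀ i, fRic I AV π AC v w i ≤ 0}

/-- `E°(w) = {v : f_i(v,w) < 0 ∀ i}`. -/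
def EsetO {m n : ℕ} (I : Finset (Fin m)) (AV : Matrix (Fin m) (Fin m) ℝ)
    (π : Fin m → Matrix (Fin n) (Fin n) ℝ) (AC : Matrix (Fin m) (Fin n) ℝ)
    (w : Fin n → ℝ) : Set (Fin m → ℝ) :=
  {v | ∀ i, fRic I AV π AC v w i < 0}

/-- `𝔇 = {w ∈ Ker A^D : E(w) ≠ ∅}`. -/
def Dset {m n : ℕ} (I : Finset (Fin m)) (AV : Matrix (Fin m) (Fin m) ℝ)
    (π : Fin m → Matrix (Fin n) (Fin n) ℝ) (AC : Matrix (Fin m) (Fin n) ℝ)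
    (AD : Matrix (Fin n) (Fin n) ℝ) : Set (Fin n → ℝ) :=
  {w | AD.mulVec w = 0 ∧ (Eset I AV π AC w).Nonempty}

/-- `𝔇° = {w ∈ Ker A^D : E°(w) ≠ ∅}`. -/
def DsetO {m n : ℕ} (I : Finset (Fin m)) (AV : Matrix (Fin m) (Fin m) ℝ)
    (π : Fin m → Matrix (Fin n) (Fin n) ℝ) (AC : Matrix (Fin m) (Fin n) ℝ)
    (AD : Matrix (Fin n) (Fin n) ℝ) : Set (Fin n → ℝ) :=
  {w | AD.mulVec w = 0 ∧ (EsetO I AV π AC w).Nonempty}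
/-- The vector field of the transformed system (quadODE) on `ℝ^{m+1}`. -/
def Fq {m n : ℕ} (I : Finset (Fin m)) (AV : Matrix (Fin m) (Fin m) ℝ)
    (π : Fin m → Matrix (Fin n) (Fin n) ℝ) (AC : Matrix (Fin m) (Fin n) ℝ)
    (T : ℝ) (w : Fin n → ℝ) (x : Fin (m + 1) → ℝ) (i : Fin (m + 1)) : ℝ :=
  if h : (i : ℕ) < m then
    (T / 2) * (x i) ^ 2 * (if (⟨i.1, h⟩ : Fin m) ∈ I then 1 else 0) - x i
      + T * (∑ k ∈ Finset.univ.filter (fun k : Fin m => k ≤ (⟨i.1, h⟩ : Fin m)),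
          AV ⟨i.1, h⟩ k * x k.castSucc) * x (Fin.last m)
      + T * (x (Fin.last m)) ^ 2 * gfun π AC w ⟨i.1, h⟩
  else
    -x i

/-- Stable set `W^s_ν(w,T)` of an equilibrium `(ν,0)` of (quadODE): initial conditions `v`
such that the (quadODE) solution starting at `(v,1)` is global and converges to `(ν,0)`. -/
def WsQ {m n : ℕ} (I : Finset (Fin m)) (AV : Matrix (Fin m) (Fin m) ℝ)
    (π : Fin m → Matrix (Fin n) (Fin n) ℝ) (AC : Matrix (Fin m) (Fin n) ℝ)
    (T : ℝ) (w : Fin n → ℝ) (ν : Fin m → ℝ) : Set (Fin m → ℝ) :=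
  {v | ∃ x : ℝ → Fin (m + 1) → ℝ, x 0 = Fin.snoc v 1 ∧
    (∀ s : ℝ, 0 ≤ s → HasDerivAt x (Fq I AV π AC T w (x s)) s) ∧
    Filter.Tendsto x Filter.atTop (nhds (Fin.snoc ν 0))}

/-- `S_T` as a subset of `ℝ^m × Ker A^D`: pairs `(v,w)` whose (Ric-V) solution stays
finite for all `t < T`, i.e. `T*(v,w) ≥ T`. -/
def STP {m n : ℕ} (I : Finset (Fin m)) (AV : Matrix (Fin m) (Fin m) ℝ)
    (π : Fin m → Matrix (Fin n) (Fin n) ℝ) (AC : Matrix (Fin m) (Fin n) ℝ)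
    (AD : Matrix (Fin n) (Fin n) ℝ) (T : ℝ) :
    Set {p : (Fin m → ℝ) × (Fin n → ℝ) // AD.mulVec p.2 = 0} :=
  {p | ∃ y : ℝ → Fin m → ℝ, y 0 = p.val.1 ∧
    ∀ t : ℝ, 0 ≤ t → t < T → HasDerivAt y (fRic I AV π AC (y t) p.val.2) t}

open scoped ENNReal

/-- `y` solves `ẏ = F(y)` on `[0,T)`. -/
def SolOn {d : ℕ} (F : (Fin d → ℝ) → (Fin d → ℝ)) (y : ℝ → Fin d → ℝ) (T : ℝ≥0∞) : Prop :=
  ∀ t : ℝ, 0 ≤ t → ENNReal.ofReal t < T → HasDerivAt y (F (y t)) t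

/-- `y` is a maximal solution of `ẏ = F(y)`, with lifetime `T`: it is a solution on `[0,T)`
and no solution with the same initial value exists on a longer interval. -/
def IsMaxSol {d : ℕ} (F : (Fin d → ℝ) → (Fin d → ℝ)) (y : ℝ → Fin d → ℝ) (T : ℝ≥0∞) : Prop :=
  0 < T ∧ SolOn F y T ∧
    ∀ (z : ℝ → Fin d → ℝ) (T' : ℝ≥0∞), T < T' → SolOn F z T' → z 0 ≠ y 0

/-- Lyapunov stability of an equilibrium point. -/
def StablePt {d : ℕ} (F : (Fin d → ℝ) → (Fin d → ℝ)) (ν : Fin d → ℝ) : Prop :=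
  ∀ ε : ℝ, 0 < ε → ∃ δ : ℝ, 0 < δ ∧ ∀ (y : ℝ → Fin d → ℝ) (T : ℝ≥0∞),
    IsMaxSol F y T → ‖y 0 - ν‖ < δ →
      ∀ t : ℝ, 0 < t → ENNReal.ofReal t < T → ‖y t - ν‖ < ε

/-- Asymptotic stability of an equilibrium point. -/
def AsympStablePt {d : ℕ} (F : (Fin d → ℝ) → (Fin d → ℝ)) (ν : Fin d → ℝ) : Prop :=
  StablePt F ν ∧ ∃ δ : ℝ, 0 < δ ∧ ∀ (y : ℝ → Fin d → ℝ) (T : ℝ≥0∞),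
    IsMaxSol F y T → ‖y 0 - ν‖ < δ → T = ⊤ ∧ Filter.Tendsto y Filter.atTop (nhds ν)

open Set Asymptotics
open scoped NNReal

section ScalarODE

variable {u d : ℝ → ℝ} {a c : ℝ}

theorem le_of_forall_eq_imp_deriv_neg (hu : ∀ s ≥ a, HasDerivAt u (d s) s)
    (hd : ∀ s ≥ a, u s = c → d s < 0) (ha : u a ≤ c) {s : ℝ} (hs : a ≤ s) : u s ≤ c :=
  image_le_of_deriv_right_lt_deriv_boundary' (B := fun _ => c) (B' := fun _ => 0)
    (fun t ht => (hu t ht.1).continuousAt.continuousWithinAt)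
    (fun t ht => (hu t ht.1).hasDerivWithinAt) ha continuousOn_const
    (fun _ _ => hasDerivWithinAt_const _ _ _) (fun t ht => hd t ht.1) ⟨hs, le_rfl⟩

theorem le_of_forall_eq_imp_deriv_pos (hu : ∀ s ≥ a, HasDerivAt u (d s) s)
    (hd : ∀ s ≥ a, u s = c → 0 < d s) (ha : c ≤ u a) {s : ℝ} (hs : a ≤ s) : c ≤ u s :=
  neg_le_neg_iff.1 <| le_of_forall_eq_imp_deriv_neg (u := fun t => -u t) (d := fun t => -d t)
    (fun t ht => (hu t ht).neg) (fun t ht h => neg_neg_of_pos (hd t ht (neg_inj.1 h)))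
    (neg_le_neg ha) hs

theorem tendsto_atTop_of_le_deriv (hc : 0 < c) (hu : ∀ s ≥ a, HasDerivAt u (d s) s)
    (hd : ∀ s ≥ a, c ≤ d s) : Tendsto u atTop atTop := by
  have hgrowth : ∀ s ≥ a, c * (s - a) ≤ u s - u a := fun s hs =>
    (convex_Ici a).mul_sub_le_image_sub_of_le_deriv
      (fun t ht => (hu t ht).continuousAt.continuousWithinAt)
      (fun t ht => (hu t (interior_subset ht)).differentiableAt.differentiableWithinAt)
      (fun t ht => (hu t (interior_subset ht)).deriv ▸ hd t (interior_subset ht))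
      a self_mem_Ici s hs hs
  refine tendsto_atTop_mono' atTop ?_ <| (tendsto_id.atTop_mul_const hc).atTop_add
    (tendsto_const_nhds (x := u a - c * a))
  filter_upwards [eventually_ge_atTop a] with s hs
  simp only [id]
  linarith [hgrowth s hs]

theorem eq_zero_of_tendsto_of_tendsto_deriv {l L : ℝ} (hu : ∀ s ≥ a, HasDerivAt u (d s) s)
    (hl : Tendsto u atTop (𝓝 l)) (hL : Tendsto d atTop (𝓝 L)) : L = 0 := by
  have key : ∀ {u d : ℝ → ℝ} {l L : ℝ}, (∀ s ≥ a, HasDerivAt u (d s) s) →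
      Tendsto u atTop (𝓝 l) → Tendsto d atTop (𝓝 L) → ¬ 0 < L := by
    intro u d l L hu hl hL hLpos
    obtain ⟨s₀, hs₀⟩ := eventually_atTop.1 <|
      (hL.eventually (Ici_mem_nhds (half_lt_self hLpos))).and (eventually_ge_atTop a)
    exact not_tendsto_nhds_of_tendsto_atTop (tendsto_atTop_of_le_deriv (half_pos hLpos)
      (fun s hs => hu s (hs₀ s hs).2) (fun s hs => (hs₀ s hs).1)) l hl
  rcases lt_trichotomy L 0 with hneg | hzero | hpos
  · exact absurd (neg_pos.2 hneg) (key (fun s hs => (hu s hs).neg) hl.neg hL.neg)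
  · exact hzero
  · exact absurd hpos (key hu hl hL)

end ScalarODE

section Asymptotic

variable {φ ε u : ℝ → ℝ} {a : ℝ}

theorem eventually_le_of_frequently_le_of_pos {c : ℝ} (hε : Tendsto ε atTop (𝓝 0))
    (hu : ∀ s ≥ a, HasDerivAt u (φ (u s) + ε s) s) (hc : 0 < φ c)
    (hfreq : ∃ᶠ s in atTop, c ≤ u s) : ∀ᶠ s in atTop, c ≤ u s := by
  obtain ⟨s₀, hs₀⟩ := eventually_atTop.1 <|
    (hε.eventually (Ioi_mem_nhds (neg_neg_of_pos hc))).and (eventually_ge_atTop a)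
  obtain ⟨s₁, hs₁, hs₁₀⟩ := (hfreq.and_eventually (eventually_ge_atTop s₀)).exists
  refine eventually_atTop.2 ⟨s₁, fun s hs => le_of_forall_eq_imp_deriv_pos
    (fun t ht => hu t (hs₀ t (hs₁₀.trans ht)).2) (fun t ht h => ?_) hs₁ hs⟩
  have := (hs₀ t (hs₁₀.trans ht)).1
  rw [h]
  linarith

theorem exists_tendsto_of_hasDerivAt_eq_comp_add (hφ : Continuous φ)
    (hzero : {v | φ v = 0}.Finite) (hε : Tendsto ε atTop (𝓝 0))
    (hu : ∀ s ≥ a, HasDerivAt u (φ (u s) + ε s) s) (hb : u =O[atTop] (fun _ => (1 : ℝ))) :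
    ∃ r, φ r = 0 ∧ Tendsto u atTop (𝓝 r) := by
  obtain ⟨hbdd_le, hbdd_ge⟩ := isBoundedUnder_le_abs.1 ((isBigO_one_iff ℝ).1 hb)
  have hlim : liminf u atTop = limsup u atTop := by
    by_contra hne
    obtain ⟨c, ⟨hlc, hcL⟩, hc⟩ := ((Ioo_infinite
      ((liminf_le_limsup hbdd_le hbdd_ge).lt_of_ne hne)).sdiff hzero).nonempty
    have hbelow : ∃ᶠ s in atTop, u s < c :=
      frequently_lt_of_liminf_lt hbdd_le.isCoboundedUnder_ge hlc
    have habove : ∃ᶠ s in atTop, c < u s :=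
      frequently_lt_of_lt_limsup hbdd_ge.isCoboundedUnder_le hcL
    rcases (Ne.lt_or_gt hc : φ c < 0 ∨ 0 < φ c) with hneg | hpos
    · have hmirror := eventually_le_of_frequently_le_of_pos (u := fun s => -u s)
        (φ := fun v => -φ (-v)) (ε := fun s => -ε s) (c := -c) (by simpa using hε.neg)
        (fun s hs => (hu s hs).neg.congr_deriv (by simp only [neg_neg]; ring))
        (by simpa using hneg)
        (hbelow.mono fun s hs => neg_le_neg hs.le)
      exact habove (hmirror.mono fun s hs => not_lt.2 (neg_le_neg_iff.1 hs))
    · exact hbelow ((eventually_le_of_frequently_le_of_pos hε hu hpos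
        (habove.mono fun s hs => hs.le)).mono fun s hs => not_lt.2 hs)
  have hconv : Tendsto u atTop (𝓝 (liminf u atTop)) :=
    tendsto_of_liminf_eq_limsup rfl hlim.symm hbdd_le hbdd_ge
  refine ⟨_, ?_, hconv⟩
  simpa using eq_zero_of_tendsto_of_tendsto_deriv hu hconv
    (((hφ.tendsto _).comp hconv).add hε)

end Asymptotic

section Riccati

variable {u β ε : ℝ → ℝ} {a b : ℝ}

theorem riccati_lower_bound (ha : 0 ≤ a) (hβ : ∀ s ≥ b, |β s| ≤ 1 / 2) (hε : ∀ s ≥ b, |ε s| ≤ 1)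
    (hu : ∀ s ≥ b, HasDerivAt u (a * u s ^ 2 - u s + β s * u s + ε s) s) {s : ℝ} (hs : b ≤ s) :
    min (u b) (-4) ≤ u s := by
  refine le_of_forall_eq_imp_deriv_pos hu (fun t ht hut => ?_) (min_le_left _ _) hs
  have hle : u t ≤ -4 := hut ▸ min_le_right _ _
  have := abs_le.1 (hβ t ht)
  have := abs_le.1 (hε t ht)
  nlinarith [mul_nonneg ha (sq_nonneg (u t))]

theorem riccati_upper_bound_of_eq_zero (hβ : ∀ s ≥ b, |β s| ≤ 1 / 2) (hε : ∀ s ≥ b, |ε s| ≤ 1)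
    (hu : ∀ s ≥ b, HasDerivAt u (0 * u s ^ 2 - u s + β s * u s + ε s) s) {s : ℝ} (hs : b ≤ s) :
    u s ≤ max (u b) 4 := by
  refine le_of_forall_eq_imp_deriv_neg hu (fun t ht hut => ?_) (le_max_left _ _) hs
  have hge : 4 ≤ u t := hut ▸ le_max_right _ _
  have := abs_le.1 (hβ t ht)
  have := abs_le.1 (hε t ht)
  nlinarith

theorem riccati_upper_bound_of_pos (ha : 0 < a) (hβ : ∀ s ≥ b, |β s| ≤ 1 / 2)
    (hε : ∀ s ≥ b, |ε s| ≤ 1)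
    (hu : ∀ s ≥ b, HasDerivAt u (a * u s ^ 2 - u s + β s * u s + ε s) s) {s : ℝ} (hs : b ≤ s) :
    u s < max 2 (4 / a) := by
  set M := max 2 (4 / a)
  have hquad : ∀ t ≥ b, M ≤ u t → a / 2 * u t ^ 2 ≤ a * u t ^ 2 - u t + β t * u t + ε t := by
    intro t ht hMu
    have h2 : 2 ≤ u t := (le_max_left _ _).trans hMu
    have h4 : 4 ≤ a * u t := by
      have := mul_le_mul_of_nonneg_left ((le_max_right _ _).trans hMu) ha.le
      rwa [mul_div_cancel₀ _ ha.ne'] at this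
    have := abs_le.1 (hβ t ht)
    have := abs_le.1 (hε t ht)
    nlinarith
  by_contra! hMs
  -- once above `M`, `u` stays there, and `-1/u` then grows linearly although it stays negative
  have hstay : ∀ t ≥ s, M ≤ u t := fun t ht => le_of_forall_eq_imp_deriv_pos
    (fun t ht' => hu t (hs.trans ht'))
    (fun t ht' hut => (hquad t (hs.trans ht') hut.ge).trans_lt' (by rw [hut]; positivity)) hMs ht
  have hpos : ∀ t ≥ s, 0 < u t := fun t ht => lt_of_lt_of_le (by positivity) (hstay t ht)
  have hinv := tendsto_atTop_of_le_deriv (u := fun t => -(u t)⁻¹) (half_pos ha)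
    (fun t ht => ((hu t (hs.trans ht)).inv (hpos t ht).ne').neg)
    (fun t ht => by
      rw [neg_div, neg_neg, le_div_iff₀ (pow_pos (hpos t ht) 2)]
      exact hquad t (hs.trans ht) (hstay t ht))
  obtain ⟨t, ht, hts⟩ := ((tendsto_atTop.1 hinv 0).and (eventually_ge_atTop s)).exists
  exact (neg_nonneg.1 ht).not_gt (inv_pos.2 (hpos t hts))

theorem riccati_isBigO_one (ha : 0 ≤ a) (hβ : Tendsto β atTop (𝓝 0)) (hε : Tendsto ε atTop (𝓝 0))
    (hu : ∀ s ≥ b, HasDerivAt u (a * u s ^ 2 - u s + β s * u s + ε s) s) :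
    u =O[atTop] (fun _ => (1 : ℝ)) := by
  obtain ⟨s₀, hs₀⟩ := eventually_atTop.1 <|
    ((hβ.abs.eventually (Iic_mem_nhds (by norm_num : |(0 : ℝ)| < 1 / 2))).and
      ((hε.abs.eventually (Iic_mem_nhds (by norm_num : |(0 : ℝ)| < 1))).and
        (eventually_ge_atTop b)))
  have hβ' : ∀ s ≥ s₀, |β s| ≤ 1 / 2 := fun s hs => (hs₀ s hs).1
  have hε' : ∀ s ≥ s₀, |ε s| ≤ 1 := fun s hs => (hs₀ s hs).2.1
  have hu' : ∀ s ≥ s₀, HasDerivAt u _ s := fun s hs => hu s (hs₀ s hs).2.2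
  obtain ⟨M, hM⟩ : ∃ M, ∀ s ≥ s₀, u s ≤ M := by
    rcases ha.eq_or_lt with rfl | hapos
    · exact ⟨_, fun s hs => riccati_upper_bound_of_eq_zero hβ' hε' hu' hs⟩
    · exact ⟨_, fun s hs => (riccati_upper_bound_of_pos hapos hβ' hε' hu' hs).le⟩
  refine (isBigO_one_iff ℝ).2 <| isBoundedUnder_of_eventually_le (a := max M (-min (u s₀) (-4)))
    (eventually_atTop.2 ⟨s₀, fun s hs => abs_le.2 ⟨?_, (hM s hs).trans (le_max_left _ _)⟩⟩)
  have := riccati_lower_bound ha hβ' hε' hu' hs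
  linarith [le_max_right M (-min (u s₀) (-4))]

end Riccati

theorem hasDerivAt_ite_le {E : Type*} [NormedAddCommGroup E] [NormedSpace ℝ E] {f g : ℝ → E}
    {f' : E} {a : ℝ} (hf : HasDerivWithinAt f f' (Iic a) a)
    (hg : HasDerivWithinAt g f' (Ici a) a) (hfg : f a = g a) :
    HasDerivAt (fun t => if t ≤ a then f t else g t) f' a := by
  have hle : HasDerivWithinAt (fun t => if t ≤ a then f t else g t) f' (Iic a) a :=
    hf.congr (fun t ht => if_pos ht) (if_pos le_rfl)
  have hge : HasDerivWithinAt (fun t => if t ≤ a then f t else g t) f' (Ici a) a :=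
    hg.congr (fun t ht => by
      by_cases hta : t ≤ a
      · rw [if_pos hta, le_antisymm hta ht, hfg]
      · exact if_neg hta) (by simp [hfg])
  simpa [Iic_union_Ici] using hle.union hge

section Blowup

variable {E : Type*} [NormedAddCommGroup E] [NormedSpace ℝ E] [FiniteDimensional ℝ E]
  {F : E → E}

theorem ContDiff.exists_forall_norm_le_exists_hasDerivWithinAt (hF : ContDiff ℝ 1 F) (R : ℝ) :
    ∃ δ > 0, ∀ (t₀ : ℝ) (x₀ : E), ‖x₀‖ ≤ R → ∃ f : ℝ → E, f t₀ = x₀ ∧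
      ∀ t ∈ Icc (t₀ - δ) (t₀ + δ), HasDerivWithinAt f (F (f t)) (Icc (t₀ - δ) (t₀ + δ)) t := by
  obtain ⟨K, hK⟩ := hF.contDiffOn.exists_lipschitzOnWith one_ne_zero (convex_closedBall 0 (R + 1))
    (isCompact_closedBall 0 (R + 1))
  obtain ⟨L, hL⟩ := (isCompact_closedBall (0 : E) (R + 1)).exists_bound_of_continuousOn
    hF.continuous.continuousOn
  set L' : ℝ≥0 := ⟨max L 0, le_max_right _ _⟩
  refine ⟨1 / (L' + 1), by positivity, fun t₀ x₀ hx₀ => ?_⟩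
  have hball : Metric.closedBall x₀ (1 : ℝ≥0) ⊆ Metric.closedBall 0 (R + 1) := by
    intro y hy
    rw [mem_closedBall_zero_iff]
    rw [Metric.mem_closedBall, dist_eq_norm, NNReal.coe_one] at hy
    linarith [norm_le_norm_sub_add y x₀]
  have hPL : IsPicardLindelof (fun _ => F) (tmin := t₀ - 1 / (L' + 1)) (tmax := t₀ + 1 / (L' + 1))
      ⟨t₀, by constructor <;> linarith [show (0 : ℝ) < 1 / (L' + 1) by positivity]⟩
      x₀ 1 0 L' K :=
    IsPicardLindelof.of_time_independent
      (fun y hy => (hL y (hball hy)).trans (le_max_left _ _)) (hK.mono hball) (by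
        simp only [add_sub_cancel_left, sub_sub_cancel, max_self, NNReal.coe_one,
          NNReal.coe_zero, sub_zero]
        rw [mul_one_div, div_le_one (by positivity)]
        linarith)
  exact hPL.exists_eq_forall_mem_Icc_hasDerivWithinAt₀

theorem IsMaxSol.tendsto_norm_atTop {d : ℕ} {F : (Fin d → ℝ) → Fin d → ℝ} (hF : ContDiff ℝ 1 F)
    {x : ℝ → Fin d → ℝ} {S : ℝ} (hx : IsMaxSol F x (ENNReal.ofReal S)) :
    Tendsto (fun s => ‖x s‖) (𝓝[<] S) atTop := by
  obtain ⟨hSpos, hsol, hmax⟩ := hx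
  have hS : 0 < S := ENNReal.ofReal_pos.1 hSpos
  have hsol' : ∀ t, 0 ≤ t → t < S → HasDerivAt x (F (x t)) t := fun t ht htS =>
    hsol t ht ((ENNReal.ofReal_lt_ofReal_iff hS).2 htS)
  by_contra hblow
  obtain ⟨R, hR⟩ : ∃ R, ∃ᶠ s in 𝓝[<] S, ‖x s‖ < R := by
    simpa [tendsto_atTop, not_le] using hblow
  obtain ⟨δ, hδ, hloc⟩ := hF.exists_forall_norm_le_exists_hasDerivWithinAt R
  obtain ⟨s₀, hs₀R, hs₀⟩ := (hR.and_eventually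
    (Ioo_mem_nhdsLT (show max 0 (S - δ) < S from max_lt hS (by linarith)))).exists
  have hs₀0 : 0 < s₀ := (le_max_left _ _).trans_lt hs₀.1
  have hs₀δ : S < s₀ + δ := by linarith [(le_max_right 0 (S - δ)).trans_lt hs₀.1]
  obtain ⟨f, hf₀, hf⟩ := hloc s₀ (x s₀) hs₀R.le
  -- continue `x` past `S` by the local solution through `x s₀`
  refine hmax (fun t => if t ≤ s₀ then x t else f t) (ENNReal.ofReal (s₀ + δ))
    ((ENNReal.ofReal_lt_ofReal_iff (by linarith)).2 hs₀δ) (fun t ht htlt => ?_) (if_pos hs₀0.le)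
  rw [ENNReal.ofReal_lt_ofReal_iff (by linarith)] at htlt
  rcases lt_trichotomy t s₀ with hlt | rfl | hgt
  · have hev : (fun t => if t ≤ s₀ then x t else f t) =ᶠ[𝓝 t] x :=
      eventually_of_mem (Iio_mem_nhds hlt) fun t' ht' => if_pos (le_of_lt ht')
    beta_reduce
    rw [if_pos hlt.le]
    exact (hsol' t ht (hlt.trans hs₀.2)).congr_of_eventuallyEq hev
  · beta_reduce
    rw [if_pos le_rfl]
    refine hasDerivAt_ite_le (hsol' t ht hs₀.2).hasDerivWithinAt ?_ hf₀.symm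
    rw [← hf₀]
    exact (hf t ⟨by linarith, by linarith⟩).mono_of_mem_nhdsWithin
      (mem_nhdsWithin_of_mem_nhds (Icc_mem_nhds (by linarith) (by linarith)))
  · have hev : (fun t => if t ≤ s₀ then x t else f t) =ᶠ[𝓝 t] f :=
      eventually_of_mem (Ioi_mem_nhds hgt) fun t' ht' => if_neg (not_le.2 ht')
    beta_reduce
    rw [if_neg (not_le.2 hgt)]
    exact ((hf t ⟨by linarith, htlt.le⟩).hasDerivAt
      (Icc_mem_nhds (by linarith) htlt)).congr_of_eventuallyEq hev

end Blowup

theorem setOf_mul_sq_sub_eq_zero_finite (a : ℝ) : {v : ℝ | a * v ^ 2 - v = 0}.Finite := by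
  refine (Set.toFinite {0, a⁻¹}).subset fun v hv => ?_
  have : v * (a * v - 1) = 0 := by rw [← hv.out]; ring
  rcases mul_eq_zero.1 this with h | h
  · exact .inl h
  · exact .inr (eq_inv_of_mul_eq_one_right (sub_eq_zero.1 h))

theorem exists_norm_le_of_isBigO_one {E : Type*} [SeminormedAddCommGroup E] {f : ℝ → E} {a : ℝ}
    (hf : ContinuousOn f (Ici a)) (h : f =O[atTop] (fun _ => (1 : ℝ))) :
    ∃ C, ∀ s ≥ a, ‖f s‖ ≤ C := by
  obtain ⟨C₁, hC₁⟩ := ((isBigO_one_iff ℝ).1 h).eventually_le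
  obtain ⟨s₀, hs₀⟩ := eventually_atTop.1 hC₁
  obtain ⟨C₂, hC₂⟩ := isCompact_Icc.exists_bound_of_continuousOn
    (hf.mono (Icc_subset_Ici_self : Icc a s₀ ⊆ Ici a))
  refine ⟨max C₁ C₂, fun s hs => ?_⟩
  rcases le_total s s₀ with hs₀' | hs₀'
  · exact (hC₂ s ⟨hs, hs₀'⟩).trans (le_max_right _ _)
  · exact (hs₀ s hs₀').trans (le_max_left _ _)

namespace QuadODE

variable {m n : ℕ} {I : Finset (Fin m)} {AV : Matrix (Fin m) (Fin m) ℝ}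
  {π : Fin m → Matrix (Fin n) (Fin n) ℝ} {AC : Matrix (Fin m) (Fin n) ℝ} {T : ℝ} {w : Fin n → ℝ}

theorem Fq_castSucc (x : Fin (m + 1) → ℝ) (i : Fin m) :
    Fq I AV π AC T w x i.castSucc =
      T / 2 * (if i ∈ I then 1 else 0) * x i.castSucc ^ 2 - x i.castSucc
        + T * AV i i * x (Fin.last m) * x i.castSucc
        + x (Fin.last m) * (T * ∑ k ∈ Finset.univ.filter (· < i), AV i k * x k.castSucc
          + T * gfun π AC w i * x (Fin.last m)) := by
  have hle : Finset.univ.filter (· ≤ i) = insert i (Finset.univ.filter (· < i)) := by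
    ext k; simp [le_iff_lt_or_eq, or_comm]
  simp only [Fq, Fin.val_castSucc, i.isLt, dite_true, Fin.eta, hle,
    Finset.sum_insert (by simp : i ∉ Finset.univ.filter (· < i))]
  ring

theorem Fq_last (x : Fin (m + 1) → ℝ) : Fq I AV π AC T w x (Fin.last m) = -x (Fin.last m) := by
  simp [Fq]

theorem contDiff_Fq : ContDiff ℝ 1 (Fq I AV π AC T w) := by
  refine contDiff_pi.2 fun i => ?_
  unfold Fq
  split_ifs <;> fun_prop

variable {x : ℝ → Fin (m + 1) → ℝ}

theorem last_eq_mul_exp (hx : SolOn (Fq I AV π AC T w) x ⊤)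
    {s : ℝ} (hs : 0 ≤ s) :
    x s (Fin.last m) = x 0 (Fin.last m) * Real.exp (-s) := by
  have hderiv : ∀ t ≥ 0, HasDerivAt (fun t => x t (Fin.last m) * Real.exp t) 0 t := fun t ht =>
    ((hasDerivAt_pi.1 (hx t ht ENNReal.ofReal_lt_top) (Fin.last m)).mul
      (Real.hasDerivAt_exp t)).congr_deriv (by rw [Fq_last]; ring)
  have := constant_of_has_deriv_right_zero
    (fun t ht => (hderiv t ht.1).continuousAt.continuousWithinAt)
    (fun t ht => (hderiv t ht.1).hasDerivWithinAt) s ⟨hs, le_rfl⟩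
  rw [Real.exp_zero, mul_one] at this
  rw [← this, Real.exp_neg, mul_inv_cancel_right₀ (Real.exp_pos s).ne']

theorem tendsto_last (hx : SolOn (Fq I AV π AC T w) x ⊤) :
    Tendsto (fun s => x s (Fin.last m)) atTop (𝓝 0) := by
  refine (tendsto_congr' ?_).2 (by simpa using
    Real.tendsto_exp_neg_atTop_nhds_zero.const_mul (x 0 (Fin.last m)))
  filter_upwards [eventually_ge_atTop 0] with s hs using last_eq_mul_exp hx hs

theorem tendsto_const_mul_last (hx : SolOn (Fq I AV π AC T w) x ⊤) (c : ℝ) :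
    Tendsto (fun s => c * x s (Fin.last m)) atTop (𝓝 0) := by
  simpa using (tendsto_last hx).const_mul c

theorem hasDerivAt_castSucc (hx : SolOn (Fq I AV π AC T w) x ⊤)
    (i : Fin m) {s : ℝ} (hs : 0 ≤ s) :
    HasDerivAt (fun t => x t i.castSucc)
      (T / 2 * (if i ∈ I then 1 else 0) * x s i.castSucc ^ 2 - x s i.castSucc
        + T * AV i i * x s (Fin.last m) * x s i.castSucc
        + x s (Fin.last m) * (T * ∑ k ∈ Finset.univ.filter (· < i), AV i k * x s k.castSucc
          + T * gfun π AC w i * x s (Fin.last m))) s := by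
  simpa only [Fq_castSucc] using hasDerivAt_pi.1 (hx s hs ENNReal.ofReal_lt_top) i.castSucc

theorem tendsto_coupling (hx : SolOn (Fq I AV π AC T w) x ⊤) (i : Fin m)
    (hprev : ∀ k < i, (fun s => x s k.castSucc) =O[atTop] (fun _ => (1 : ℝ))) :
    Tendsto (fun s => x s (Fin.last m) * (T * ∑ k ∈ Finset.univ.filter (· < i),
      AV i k * x s k.castSucc + T * gfun π AC w i * x s (Fin.last m))) atTop (𝓝 0) := by
  have hbdd : (fun s => T * ∑ k ∈ Finset.univ.filter (· < i), AV i k * x s k.castSucc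
      + T * gfun π AC w i * x s (Fin.last m)) =O[atTop] (fun _ => (1 : ℝ)) :=
    ((IsBigO.fun_sum fun k hk => (hprev k (Finset.mem_filter.1 hk).2).const_mul_left
      (AV i k)).const_mul_left T).add (((tendsto_last hx).isBigO_one ℝ).const_mul_left _)
  exact (tendsto_last hx).zero_mul_isBoundedUnder_le ((isBigO_one_iff ℝ).1 hbdd)

theorem isBigO_one (hx : SolOn (Fq I AV π AC T w) x ⊤)
    (hT : 0 ≤ T) : x =O[atTop] (fun _ => (1 : ℝ)) := by
  have hcoord : ∀ i : Fin m, (fun s => x s i.castSucc) =O[atTop] (fun _ => (1 : ℝ)) := by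
    intro i
    -- coordinate `i` is perturbed only through the earlier coordinates (lower triangularity)
    induction i using WellFoundedLT.induction with
    | _ i ih =>
      exact riccati_isBigO_one (mul_nonneg (div_nonneg hT two_pos.le) (by split_ifs <;> norm_num))
        (tendsto_const_mul_last hx _) (tendsto_coupling hx i ih)
        (fun s hs => hasDerivAt_castSucc hx i hs)
  exact isBigO_pi.2 (Fin.lastCases ((tendsto_last hx).isBigO_one ℝ) hcoord)

theorem exists_equilibrium_tendsto (hx : SolOn (Fq I AV π AC T w) x ⊤)
    (hT : 0 ≤ T) :
    ∃ p, (∀ i, Fq I AV π AC T w p i = 0) ∧ Tendsto x atTop (𝓝 p) := by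
  have hb := isBigO_pi.1 (isBigO_one hx hT)
  have hcoord : ∀ i : Fin m, ∃ r, T / 2 * (if i ∈ I then 1 else 0) * r ^ 2 - r = 0 ∧
      Tendsto (fun s => x s i.castSucc) atTop (𝓝 r) := fun i => by
    have hε := ((tendsto_const_mul_last hx (T * AV i i)).zero_mul_isBoundedUnder_le
      ((isBigO_one_iff ℝ).1 (hb i.castSucc))).add (tendsto_coupling hx i fun k _ => hb k.castSucc)
    rw [add_zero] at hε
    exact exists_tendsto_of_hasDerivAt_eq_comp_add (by fun_prop)
      (setOf_mul_sq_sub_eq_zero_finite _) hε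
      (fun s hs => (hasDerivAt_castSucc hx i hs).congr_deriv (by ring)) (hb i.castSucc)
  choose r hr hconv using hcoord
  refine ⟨Fin.snoc r 0, Fin.lastCases ?_ fun i => ?_,
    tendsto_pi_nhds.2 (Fin.lastCases ?_ fun i => ?_)⟩
  · simp [Fq_last]
  · simpa [Fq_castSucc] using hr i
  · simpa using tendsto_last hx
  · simpa using hconv i

end QuadODE

theorem stmt13_general (m n : ℕ)
    (I : Finset (Fin m))
    (AV : Matrix (Fin m) (Fin m) ℝ)
    (π : Fin m → Matrix (Fin n) (Fin n) ℝ)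
    (AC : Matrix (Fin m) (Fin n) ℝ)
    (T : ℝ) (hT : 0 < T) (w : Fin n → ℝ)
    (x : ℝ → Fin (m + 1) → ℝ) (S : ℝ≥0∞)
    (hx : IsMaxSol (fun z => Fq I AV π AC T w z) x S) :
    ((∃ C : ℝ, ∀ s : ℝ, 0 ≤ s → ENNReal.ofReal s < S → ‖x s‖ ≤ C) →
      S = ⊤ ∧ ∃ p : Fin (m + 1) → ℝ, (∀ i, Fq I AV π AC T w p i = 0) ∧
        Filter.Tendsto x Filter.atTop (nhds p))
    ∧ ((¬ ∃ C : ℝ, ∀ s : ℝ, 0 ≤ s → ENNReal.ofReal s < S → ‖x s‖ ≤ C) →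
      ∃ Sstar : ℝ, 0 < Sstar ∧ S = ENNReal.ofReal Sstar ∧
        Filter.Tendsto (fun s => ‖x s‖) (nhdsWithin Sstar (Set.Iio Sstar)) Filter.atTop) := by
  rcases eq_or_ne S ⊤ with rfl | hS
  · have hglobal : SolOn (Fq I AV π AC T w) x ⊤ := hx.2.1
    obtain ⟨C, hC⟩ := exists_norm_le_of_isBigO_one
      (fun s hs => (hglobal s hs ENNReal.ofReal_lt_top).continuousAt.continuousWithinAt)
      (QuadODE.isBigO_one hglobal hT.le)
    exact ⟨fun _ => ⟨rfl, QuadODE.exists_equilibrium_tendsto hglobal hT.le⟩,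
      fun hunbdd => (hunbdd ⟨C, fun s hs _ => hC s hs⟩).elim⟩
  · obtain ⟨S, rfl⟩ : ∃ S' : ℝ, S = ENNReal.ofReal S' := ⟨S.toReal, (ENNReal.ofReal_toReal hS).symm⟩
    have hpos : 0 < S := ENNReal.ofReal_pos.1 hx.1
    have hblow := hx.tendsto_norm_atTop QuadODE.contDiff_Fq
    refine ⟨fun ⟨C, hC⟩ => ?_, fun _ => ⟨S, hpos, rfl, hblow⟩⟩
    obtain ⟨s, hCs, hs⟩ := ((hblow.eventually_gt_atTop C).and (Ioo_mem_nhdsLT hpos)).exists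
    exact absurd (hC s hs.1.le ((ENNReal.ofReal_lt_ofReal_iff hpos).2 hs.2)) (not_le.2 hCs)

/-- a maximal solution of (quadODE) with bounded trajectory is global and
converges to an equilibrium point; a maximal solution with unbounded trajectory blows up
in finite time. -/
theorem stmt13 (m n : ℕ) (hm : 1 ≤ m)
    (I : Finset (Fin m)) (hI : I.Nonempty)
    (AV : Matrix (Fin m) (Fin m) ℝ)
    (hAVtri : ∀ i k : Fin m, i < k → AV i k = 0)
    (hAVdiag : ∀ i : Fin m, AV i i < 0)
    (hAVoff : ∀ i k : Fin m, i ≠ k → 0 ≤ AV i k)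
    (π : Fin m → Matrix (Fin n) (Fin n) ℝ)
    (hπ : ∀ i, (π i).PosSemidef)
    (AC : Matrix (Fin m) (Fin n) ℝ)
    (T : ℝ) (hT : 0 < T) (w : Fin n → ℝ)
    (x : ℝ → Fin (m + 1) → ℝ) (S : ℝ≥0∞)
    (hx : IsMaxSol (fun z => Fq I AV π AC T w z) x S) :
    ((∃ C : ℝ, ∀ s : ℝ, 0 ≤ s → ENNReal.ofReal s < S → ‖x s‖ ≤ C) →
      S = ⊤ ∧ ∃ p : Fin (m + 1) → ℝ, (∀ i, Fq I AV π AC T w p i = 0) ∧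
        Filter.Tendsto x Filter.atTop (nhds p))
    ∧ ((¬ ∃ C : ℝ, ∀ s : ℝ, 0 ≤ s → ENNReal.ofReal s < S → ‖x s‖ ≤ C) →
      ∃ Sstar : ℝ, 0 < Sstar ∧ S = ENNReal.ofReal Sstar ∧
        Filter.Tendsto (fun s => ‖x s‖) (nhdsWithin Sstar (Set.Iio Sstar)) Filter.atTop) :=
  stmt13_general m n I AV π AC T hT w x S hx

end
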